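/- Let A be a commutative ℂ-algebra with derivation ∂ and let g be a unit of A, and put p = g⁻¹∂(g). Then in A[[x]] one has the identity e^{x∂}g = g·exp(Σ_{n≥1} (1/n!)(∂^{n-1}p)xⁿ). -/

import Mathlib

open PowerSeries Finset

section Aux

variable {A : Type*} [CommRing A] [Algebra ℂ A]

/-- Iterated Leibniz rule for a derivation. -/
lemma d_iter_mul (d : Derivation ℂ A A) (a b : A) (n : ℕ) :
    d^[n] (a * b) =
      ∑ k ∈ range n.succ, (n.choose k • (d^[n - k] a * d^[k] b)) := by
  induction n with
  | zero => simp [Finset.range]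
  | succ n IH =>
    have dsmul : ∀ (m : ℕ) (x : A), d (m • x) = m • d x := fun m x => by
      induction m with
      | zero => simp
      | succ m ih => simp [succ_nsmul, ih]
    calc
      d^[n + 1] (a * b) =
          d (∑ k ∈ range n.succ,
              n.choose k • (d^[n - k] a * d^[k] b)) := by
        rw [Function.iterate_succ_apply', IH]
      _ = (∑ k ∈ range n.succ,
            n.choose k • (d^[n - k + 1] a * d^[k] b)) +
          ∑ k ∈ range n.succ,
            n.choose k • (d^[n - k] a * d^[k + 1] b) := by
        rw [map_sum]
        simp_rw [dsmul, Derivation.leibniz, Function.iterate_succ_apply',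
          smul_add, sum_add_distrib]
        rw [add_comm]
        congr 1 <;> refine sum_congr rfl fun k _ => ?_ <;>
          simp only [smul_eq_mul, nsmul_eq_mul] <;> ring
      _ = (∑ k ∈ range n.succ,
                n.choose k.succ • (d^[n - k] a * d^[k + 1] b)) +
              1 • (d^[n + 1] a * d^[0] b) +
            ∑ k ∈ range n.succ, n.choose k • (d^[n - k] a * d^[k + 1] b) :=
        ?_
      _ = ((∑ k ∈ range n.succ, n.choose k • (d^[n - k] a * d^[k + 1] b)) +
              ∑ k ∈ range n.succ,
                n.choose k.succ • (d^[n - k] a * d^[k + 1] b)) +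
            1 • (d^[n + 1] a * d^[0] b) := by
        rw [add_comm, add_assoc]
      _ = (∑ i ∈ range n.succ,
              (n + 1).choose (i + 1) • (d^[n + 1 - (i + 1)] a * d^[i + 1] b)) +
            1 • (d^[n + 1] a * d^[0] b) := by
        simp_rw [Nat.choose_succ_succ, Nat.succ_sub_succ, add_smul, sum_add_distrib]
      _ = ∑ k ∈ range n.succ.succ,
            n.succ.choose k • (d^[n.succ - k] a * d^[k] b) := by
        rw [sum_range_succ' _ n.succ, Nat.choose_zero_right, tsub_zero]
    congr
    refine (sum_range_succ' _ _).trans (congr_arg₂ (· + ·) ?_ ?_)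
    · rw [sum_range_succ, Nat.choose_succ_self, zero_smul, add_zero]
      refine sum_congr rfl fun k hk => ?_
      rw [mem_range] at hk
      congr
      omega
    · simp

private lemma fact_smul (n k : ℕ) (h : k ≤ n) (x : A) :
    ((n.factorial : ℂ))⁻¹ • (n.choose k • x) =
      (((n - k).factorial : ℂ))⁻¹ • (((k.factorial : ℂ))⁻¹ • x) := by
  rw [← Nat.cast_smul_eq_nsmul ℂ, smul_smul, smul_smul]
  congr 1
  have h1 : ((n.choose k : ℂ)) * (k.factorial : ℂ) * ((n - k).factorial : ℂ)
      = (n.factorial : ℂ) := by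
    exact_mod_cast congrArg (Nat.cast : ℕ → ℂ) (Nat.choose_mul_factorial_mul_factorial h)
  have hk : (k.factorial : ℂ) ≠ 0 := Nat.cast_ne_zero.mpr k.factorial_ne_zero
  have hnk : ((n - k).factorial : ℂ) ≠ 0 := Nat.cast_ne_zero.mpr (n - k).factorial_ne_zero
  have hn : (n.factorial : ℂ) ≠ 0 := Nat.cast_ne_zero.mpr n.factorial_ne_zero
  field_simp
  linear_combination h1

/-- The "exponential of the derivation" map. -/
noncomputable def expD (d : Derivation ℂ A A) (a : A) : PowerSeries A :=
  PowerSeries.mk fun n => ((n.factorial : ℂ))⁻¹ • d^[n] a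

lemma coeff_expD (d : Derivation ℂ A A) (a : A) (n : ℕ) :
    coeff n (expD d a) = ((n.factorial : ℂ))⁻¹ • d^[n] a := coeff_mk _ _

lemma expD_mul (d : Derivation ℂ A A) (a b : A) :
    expD d (a * b) = expD d a * expD d b := by
  ext n
  rw [coeff_mul, Finset.Nat.sum_antidiagonal_eq_sum_range_succ_mk]
  rw [coeff_expD, mul_comm a b, d_iter_mul d b a n, smul_sum]
  refine sum_congr rfl fun k hk => ?_
  rw [mem_range, Nat.lt_succ_iff] at hk
  rw [coeff_expD, coeff_expD, fact_smul n k hk, smul_mul_smul_comm, smul_smul,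
    mul_comm (((n - k).factorial : ℂ))⁻¹, mul_comm ((⇑d)^[n - k] b)]

lemma derivative_expD (d : Derivation ℂ A A) (a : A) :
    d⁄dX A (expD d a) = expD d (d a) := by
  ext n
  rw [coeff_derivative, coeff_expD, coeff_expD, ← Function.iterate_succ_apply]
  have : ((n.factorial : ℂ))⁻¹ • d^[n+1] a
      = (((n+1).factorial : ℂ))⁻¹ • ((n+1 : ℂ) • d^[n+1] a) := by
    rw [smul_smul]
    congr 1
    rw [Nat.factorial_succ]
    have h : ((n : ℂ) + 1) ≠ 0 := by
      have := Nat.cast_ne_zero (R := ℂ).mpr (Nat.succ_ne_zero n)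
      push_cast at this; exact this
    have hn : (n.factorial : ℂ) ≠ 0 := Nat.cast_ne_zero.mpr n.factorial_ne_zero
    push_cast
    field_simp
  rw [this, smul_mul_assoc]
  congr 1
  rw [Algebra.smul_def, map_add, map_natCast, map_one, mul_comm]

lemma nsmul_cancel {x y : A} (n : ℕ) (h : (n + 1) • x = (n + 1) • y) : x = y := by
  have h' : ((n + 1 : ℕ) : ℂ) • x = ((n + 1 : ℕ) : ℂ) • y := by
    rw [Nat.cast_smul_eq_nsmul, Nat.cast_smul_eq_nsmul]; exact h
  have hc : ((n + 1 : ℕ) : ℂ) ≠ 0 := Nat.cast_ne_zero.mpr (Nat.succ_ne_zero n)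
  calc x = ((n+1 : ℕ) : ℂ)⁻¹ • (((n+1 : ℕ) : ℂ) • x) := by
            rw [smul_smul, inv_mul_cancel₀ hc, one_smul]
    _ = ((n+1 : ℕ) : ℂ)⁻¹ • (((n+1 : ℕ) : ℂ) • y) := by rw [h']
    _ = y := by rw [smul_smul, inv_mul_cancel₀ hc, one_smul]

/-- Uniqueness for the linear ODE `G' = P G`. -/
lemma ode_unique (P G H : PowerSeries A)
    (hG : d⁄dX A G = P * G) (hH : d⁄dX A H = P * H)
    (h0 : constantCoeff G = constantCoeff H) : G = H := by
  ext n
  induction n using Nat.strong_induction_on with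
  | _ n IH =>
    match n with
    | 0 => simpa [coeff_zero_eq_constantCoeff] using h0
    | m + 1 =>
      have eG := congrArg (coeff m) hG
      have eH := congrArg (coeff m) hH
      rw [coeff_derivative] at eG eH
      have key : coeff (m+1) G * (m+1 : A) = coeff (m+1) H * (m+1 : A) := by
        rw [eG, eH, coeff_mul, coeff_mul]
        refine sum_congr rfl fun ij hij => ?_
        rw [Finset.HasAntidiagonal.mem_antidiagonal] at hij
        rw [IH ij.2 (by omega)]
      apply nsmul_cancel m
      have : ((m + 1 : ℕ) : A) = ((m : A) + 1) := by push_cast; ring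
      rw [nsmul_eq_mul, nsmul_eq_mul, this, mul_comm, mul_comm ((m:A)+1)]
      exact key

lemma coeff_pow_eq_zero {F : PowerSeries A} (h : constantCoeff F = 0)
    {m k : ℕ} (hmk : m < k) : coeff m (F ^ k) = 0 := by
  have h1 : (X : PowerSeries A) ∣ F := X_dvd_iff.mpr h
  have h2 : (X : PowerSeries A) ^ k ∣ F ^ k := pow_dvd_pow_of_dvd h1 k
  exact (X_pow_dvd_iff.mp h2) m hmk

lemma succ_fact_inv_smul {M : Type*} [AddCommGroup M] [Module ℂ M] (n : ℕ) (x : M) :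
    (((n+1).factorial : ℂ))⁻¹ • ((n+1) • x) = ((n.factorial : ℂ))⁻¹ • x := by
  rw [← Nat.cast_smul_eq_nsmul ℂ (n+1), smul_smul]
  congr 1
  have h : ((n+1 : ℕ) : ℂ) ≠ 0 := Nat.cast_ne_zero.mpr (Nat.succ_ne_zero n)
  have hn : (n.factorial : ℂ) ≠ 0 := Nat.cast_ne_zero.mpr n.factorial_ne_zero
  rw [Nat.factorial_succ, Nat.cast_mul, mul_inv, mul_comm, ← mul_assoc,
    mul_inv_cancel₀ h, one_mul]

lemma smul_mul_natCast_succ (n : ℕ) (c : ℂ) (x : A) :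
    c • x * ((n : A) + 1) = c • (((n : ℂ) + 1) • x) := by
  rw [smul_mul_assoc]
  congr 1
  rw [Algebra.smul_def, map_add, map_natCast, map_one, mul_comm]

lemma coeff_S (F : PowerSeries A) (h0 : constantCoeff F = 0) {j N : ℕ} (hjN : j < N) :
    (∑ k ∈ range (j + 1), ((k.factorial : ℂ))⁻¹ • coeff j (F ^ k)) =
      coeff j (∑ k ∈ range N, ((k.factorial : ℂ))⁻¹ • F ^ k) := by
  rw [map_sum]
  simp_rw [PowerSeries.coeff_smul]
  refine Finset.sum_subset (Finset.range_subset_range.mpr hjN) fun k _ hk => ?_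
  rw [mem_range, not_lt] at hk
  rw [coeff_pow_eq_zero h0 (by omega), smul_zero]

lemma derivative_S (F : PowerSeries A) (N : ℕ) :
    d⁄dX A (∑ k ∈ range (N + 1), ((k.factorial : ℂ))⁻¹ • F ^ k) =
      d⁄dX A F * ∑ k ∈ range N, ((k.factorial : ℂ))⁻¹ • F ^ k := by
  rw [map_sum, sum_range_succ' _ N]
  have hzero : d⁄dX A (((Nat.factorial 0 : ℂ))⁻¹ • F ^ 0) = 0 := by
    simp
  rw [hzero, add_zero, Finset.mul_sum]
  refine sum_congr rfl fun i _ => ?_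
  have hpow : d⁄dX A (F ^ (i + 1)) = (i+1) • (F ^ i * d⁄dX A F) := by
    rw [Derivation.leibniz_pow, Nat.add_sub_cancel, smul_eq_mul]
  rw [(d⁄dX A).map_smul_of_tower ((((i+1).factorial : ℂ))⁻¹) (F ^ (i+1)), hpow,
    succ_fact_inv_smul, mul_smul_comm, mul_comm (F ^ i)]

lemma derivative_exp_series (F : PowerSeries A) (h0 : constantCoeff F = 0)
    (expF : PowerSeries A)
    (hexpF : expF = PowerSeries.mk fun n =>
      ∑ k ∈ range (n + 1), ((Nat.factorial k : ℂ))⁻¹ • coeff n (F ^ k)) :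
    d⁄dX A expF = d⁄dX A F * expF := by
  ext n
  have hc : ∀ {j N : ℕ}, j < N → coeff j expF
      = coeff j (∑ k ∈ range N, ((k.factorial : ℂ))⁻¹ • F ^ k) := by
    intro j N hjN
    rw [hexpF, coeff_mk]
    exact coeff_S F h0 hjN
  rw [coeff_derivative, hc (Nat.lt_succ_self (n+1)),
    ← coeff_derivative, derivative_S F (n+1), coeff_mul, coeff_mul]
  refine sum_congr rfl fun ij hij => ?_
  rw [Finset.HasAntidiagonal.mem_antidiagonal] at hij
  rw [← hc (show ij.2 < n + 1 by omega)]

end Aux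

/-- For a commutative `ℂ`-algebra `A` with derivation `∂` and a unit `g`, setting
`p = g⁻¹∂(g)`, one has `e^{x∂}g = g · exp(∑_{n≥1} (1/n!)(∂^{n-1}p) xⁿ)` in `A[[x]]`,
where the exponential of the (constant-term-zero) series `F` is the series whose
`n`-th coefficient is `∑_{k≤n} (1/k!) · coeff n (F^k)`. -/
theorem exp_derivation_unit (A : Type*) [CommRing A] [Algebra ℂ A]
    (d : Derivation ℂ A A) (g : Aˣ) (p : A) (hp : p = (↑g⁻¹ : A) * d (g : A))
    (F expF : PowerSeries A)
    (hF : F = PowerSeries.mk fun n =>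
      if n = 0 then 0 else ((Nat.factorial n : ℂ))⁻¹ • d^[n - 1] p)
    (hexpF : expF = PowerSeries.mk fun n =>
      ∑ k ∈ Finset.range (n + 1), ((Nat.factorial k : ℂ))⁻¹ • PowerSeries.coeff n (F ^ k)) :
    (PowerSeries.mk fun n => ((Nat.factorial n : ℂ))⁻¹ • d^[n] (g : A)) =
      PowerSeries.C (g : A) * expF := by
  have h0F : constantCoeff F = 0 := by rw [hF]; simp
  have hdF : d⁄dX A F = expD d p := by
    ext n
    rw [coeff_derivative, hF, coeff_mk, coeff_expD]
    simp only [Nat.succ_ne_zero, if_false, Nat.add_sub_cancel]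
    rw [smul_mul_natCast_succ, show ((n : ℂ) + 1) = ((n + 1 : ℕ) : ℂ) by push_cast; ring,
      Nat.cast_smul_eq_nsmul, succ_fact_inv_smul]
  have hdg : d (g : A) = (g : A) * p := by
    rw [hp, ← mul_assoc, Units.mul_inv, one_mul]
  have hG : d⁄dX A (expD d (g : A)) = expD d p * expD d (g : A) := by
    rw [derivative_expD, hdg, expD_mul, mul_comm]
  have hE : d⁄dX A expF = expD d p * expF := by
    rw [derivative_exp_series F h0F expF hexpF, hdF]
  have hH : d⁄dX A (C (g : A) * expF) = expD d p * (C (g : A) * expF) := by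
    rw [Derivation.leibniz, derivative_C, smul_zero, add_zero, smul_eq_mul, hE]
    ring
  have h0 : constantCoeff (expD d (g : A)) = constantCoeff (C (g : A) * expF) := by
    rw [map_mul, constantCoeff_C, ← coeff_zero_eq_constantCoeff_apply,
      ← coeff_zero_eq_constantCoeff_apply, coeff_expD, hexpF, coeff_mk]
    simp
  exact ode_unique (expD d p) _ _ hG hH h0
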